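/- A subset Ψ of the untwisted affine root system Φ is a maximal closed subroot system of Φ with Gr(Ψ) ≠ Φ̊ if and only if there is a maximal closed subroot system M of Φ̊ such that Ψ = M̂ = {α + rδ : α ∈ M, r ∈ ℤ}. -/

import Mathlib

noncomputable section

variable {V : Type*} [NormedAddCommGroup V] [InnerProductSpace ℝ V]

/-- The Cartan pairing `⟨β, α∨⟩ = 2(β,α)/(α,α)`. -/
def cartanPair (α β : V) : ℝ := 2 * (inner ℝ β α : ℝ) / (inner ℝ α α : ℝ)

/-- The reflection `s_α` on `V`: `s_α(β) = β - ⟨β,α∨⟩ α`. -/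
def reflV (α β : V) : V := β - cartanPair α β • α

/-- The affine reflection `s_x` on `V × ℝ` with respect to the bilinear form
`B((x,a),(y,b)) = (x,y)`. -/
def reflA (x y : V × ℝ) : V × ℝ :=
  y - (2 * (inner ℝ y.1 x.1 : ℝ) / (inner ℝ x.1 x.1 : ℝ)) • x

/-- A finite irreducible reduced crystallographic root system in `V`. -/
structure IsIrreducibleRootSystem (R : Set V) : Prop where
  finite : R.Finite
  spans : Submodule.span ℝ R = ⊤
  zero_notMem : (0 : V) ∉ R
  reduced : ∀ α ∈ R, ∀ c : ℝ, c • α ∈ R → c = 1 ∨ c = -1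
  cartan_int : ∀ α ∈ R, ∀ β ∈ R, ∃ n : ℤ, cartanPair α β = (n : ℝ)
  refl_mem : ∀ α ∈ R, ∀ β ∈ R, reflV α β ∈ R
  irred : ∀ A B : Set V, R = A ∪ B → A.Nonempty → B.Nonempty →
    ∃ a ∈ A, ∃ b ∈ B, (inner ℝ a b : ℝ) ≠ 0

/-- A subroot system of a set `Φ` of affine roots: a nonempty proper subset stable
under the reflections `s_x`, `x ∈ Ψ`. -/
def IsSubrootSystem (Φ Ψ : Set (V × ℝ)) : Prop :=
  Ψ.Nonempty ∧ Ψ ⊆ Φ ∧ Ψ ≠ Φ ∧ ∀ x ∈ Ψ, ∀ y ∈ Ψ, reflA x y ∈ Ψ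

/-- `Ψ` is closed in `Φ`. -/
def IsClosedIn (Φ Ψ : Set (V × ℝ)) : Prop := ∀ x ∈ Ψ, ∀ y ∈ Ψ, x + y ∈ Φ → x + y ∈ Ψ

def IsClosedSubrootSystem (Φ Ψ : Set (V × ℝ)) : Prop :=
  IsSubrootSystem Φ Ψ ∧ IsClosedIn Φ Ψ

/-- A maximal closed subroot system of `Φ`: any closed subroot system of `Φ`
containing it equals it. -/
def IsMaximalClosedSubrootSystem (Φ Ψ : Set (V × ℝ)) : Prop :=
  IsClosedSubrootSystem Φ Ψ ∧ ∀ Δ, IsClosedSubrootSystem Φ Δ → Ψ ⊆ Δ → Δ = Ψ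

/-- A subroot system of a finite root system `R`. -/
def IsSubrootSystemF (R S : Set V) : Prop :=
  S.Nonempty ∧ S ⊆ R ∧ S ≠ R ∧ ∀ α ∈ S, ∀ β ∈ S, reflV α β ∈ S

/-- `S` is closed in the finite root system `R`. -/
def IsClosedInF (R S : Set V) : Prop := ∀ α ∈ S, ∀ β ∈ S, α + β ∈ R → α + β ∈ S

def IsMaximalClosedSubrootSystemF (R S : Set V) : Prop :=
  (IsSubrootSystemF R S ∧ IsClosedInF R S) ∧
    ∀ T, IsSubrootSystemF R T → IsClosedInF R T → S ⊆ T → T = S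

/-- A `ℤ`-linear function on `S`: the restriction to `S` of an additive group
homomorphism from the subgroup of `V` generated by `S` to `ℤ`. -/
def IsZLinearOn (S : Set V) (p : V → ℤ) : Prop :=
  ∃ f : AddSubgroup.closure S →+ ℤ,
    ∀ α, ∀ h : α ∈ S, p α = f ⟨α, AddSubgroup.subset_closure h⟩

/-- An irreducible subset: nonempty and not a union of two nonempty mutually
orthogonal subsets. -/
def IsIrreducibleSubset (S : Set V) : Prop :=
  S.Nonempty ∧ ∀ A B : Set V, S = A ∪ B → A.Nonempty → B.Nonempty →
    ∃ a ∈ A, ∃ b ∈ B, (inner ℝ a b : ℝ) ≠ 0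

/-- The untwisted affine root system attached to `R`. -/
def affineRS (R : Set V) : Set (V × ℝ) := {x | x.1 ∈ R ∧ ∃ r : ℤ, x.2 = (r : ℝ)}

/-- The gradient of a set of affine roots. -/
def Gr (Ψ : Set (V × ℝ)) : Set V := {α | ∃ r : ℤ, (α, (r : ℝ)) ∈ Ψ}

/-- `Z_α(Ψ) = {r ∈ ℤ : α + rδ ∈ Ψ}`. -/
def ZSet (Ψ : Set (V × ℝ)) (α : V) : Set ℤ := {r | (α, (r : ℝ)) ∈ Ψ}

/-- The difference set `{r - r' : r, r' ∈ Z_α(Ψ)}`. -/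
def DiffSet (Ψ : Set (V × ℝ)) (α : V) : Set ℤ :=
  {d | ∃ r ∈ ZSet Ψ α, ∃ r' ∈ ZSet Ψ α, d = r - r'}

/-- The lift `Ŝ = {α + rδ : α ∈ S, r ∈ ℤ}` of a subset `S` of the finite root system. -/
def liftF (S : Set V) : Set (V × ℝ) := {x | x.1 ∈ S ∧ ∃ r : ℤ, x.2 = (r : ℝ)}

/-!
Taking gradients and lifting are monotone and mutually inverse on the relevant sets: the gradient
of a closed subroot system `Ψ` of `Φ` is closed and reflection-stable in `Φ̊`, and `Ψ` lies in
the lift of `Gr(Ψ)`.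
This transfers maximality in both directions. The one non-formal point is that a closed subroot
system `Δ ⊇ M̂` cannot have full gradient: `Δ` contains a whole line `α + ℤδ`, and if
`Gr(Δ) = Φ̊`, closedness carries whole lines from `β` to every root `γ` with `(β, γ) ≠ 0`
(through `β + γ` when `(β, γ) < 0`, through `-β` otherwise), so by irreducibility `Δ = Φ`.
-/

open scoped InnerProductSpace

section Lift

variable {E : Type*}

theorem mk_mem_liftF {S : Set E} {α : E} {r : ℤ} : (α, (r : ℝ)) ∈ liftF S ↔ α ∈ S :=
  ⟨And.left, fun h => ⟨h, r, rfl⟩⟩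

theorem liftF_subset_iff {S : Set E} {Ψ : Set (E × ℝ)} :
    liftF S ⊆ Ψ ↔ ∀ α ∈ S, ∀ r : ℤ, (α, (r : ℝ)) ∈ Ψ := by
  refine ⟨fun h α hα r => h (mk_mem_liftF.2 hα), ?_⟩
  rintro h ⟨α, _⟩ ⟨hα, r, rfl⟩
  exact h α hα r

theorem liftF_mono {S T : Set E} (h : S ⊆ T) : liftF S ⊆ liftF T :=
  fun _ hx => ⟨h hx.1, hx.2⟩

theorem Gr_liftF (S : Set E) : Gr (liftF S) = S :=
  Set.ext fun _ => ⟨fun ⟨_, hr⟩ => hr.1, fun h => ⟨0, mk_mem_liftF.2 h⟩⟩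

theorem subset_liftF_Gr {Ψ : Set (E × ℝ)} {S : Set E} (hΨ : Ψ ⊆ liftF S) :
    Ψ ⊆ liftF (Gr Ψ) := by
  rintro ⟨α, _⟩ hx
  obtain ⟨-, r, rfl⟩ := hΨ hx
  exact mk_mem_liftF.2 ⟨r, hx⟩

theorem Gr_mono {Ψ Δ : Set (E × ℝ)} (h : Ψ ⊆ Δ) : Gr Ψ ⊆ Gr Δ :=
  fun _ ⟨r, hr⟩ => ⟨r, h hr⟩

theorem Gr_subset {Ψ : Set (E × ℝ)} {S : Set E} (hΨ : Ψ ⊆ liftF S) : Gr Ψ ⊆ S :=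
  fun _ ⟨_, hr⟩ => (hΨ hr).1

theorem mk_intCast_add_mk_intCast [Add E] (α β : E) (r s : ℤ) :
    (α, (r : ℝ)) + (β, (s : ℝ)) = (α + β, ((r + s : ℤ) : ℝ)) := by
  rw [Prod.mk_add_mk, Int.cast_add]

theorem affineRS_eq_liftF (R : Set E) : affineRS R = liftF R := rfl

theorem isClosedInF_Gr [NormedAddCommGroup E] {R : Set E} {Ψ : Set (E × ℝ)}
    (hΨ : IsClosedIn (affineRS R) Ψ) :
    IsClosedInF R (Gr Ψ) := by
  rintro α ⟨r, hr⟩ β ⟨s, hs⟩ hαβ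
  have := hΨ _ hr _ hs
  rw [mk_intCast_add_mk_intCast] at this
  exact ⟨r + s, this (mk_mem_liftF.2 hαβ)⟩

end Lift

theorem cartanPair_self {α : V} (hα : α ≠ 0) : cartanPair α α = 2 := by
  rw [cartanPair, mul_div_assoc, div_self (inner_self_ne_zero.2 hα), mul_one]

theorem reflV_self {α : V} (hα : α ≠ 0) : reflV α α = -α := by
  rw [reflV, cartanPair_self hα, two_smul]
  abel

theorem reflV_of_cartanPair_eq_neg_one {α β : V} (h : cartanPair α β = -1) :
    reflV α β = β + α := by
  rw [reflV, h, neg_one_smul, sub_neg_eq_add]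

theorem reflA_mk (α β : V) (x y : ℝ) :
    reflA (α, x) (β, y) = (reflV α β, y - cartanPair α β * x) := by
  simp [reflA, reflV, cartanPair]

theorem cartanPair_neg {α β : V} (hα : α ≠ 0) (h : ⟪α, β⟫_ℝ < 0) : cartanPair α β < 0 := by
  rw [cartanPair, real_inner_comm]
  exact div_neg_of_neg_of_pos (by linarith) (real_inner_self_pos.2 hα)

theorem cartanPair_mul_cartanPair_le_four {α β : V} (hα : α ≠ 0) (hβ : β ≠ 0) :
    cartanPair α β * cartanPair β α ≤ 4 := by
  have hα' := real_inner_self_pos.2 hα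
  have hβ' := real_inner_self_pos.2 hβ
  have hCS := real_inner_mul_inner_self_le α β
  rw [cartanPair, cartanPair, real_inner_comm α β, div_mul_div_comm,
    div_le_iff₀ (mul_pos hα' hβ')]
  nlinarith

theorem add_eq_zero_of_cartanPair_eq_neg_two {α β : V} (hα : α ≠ 0) (hβ : β ≠ 0)
    (hαβ : cartanPair α β = -2) (hβα : cartanPair β α = -2) : α + β = 0 := by
  rw [cartanPair, div_eq_iff (inner_self_ne_zero.2 hα)] at hαβ
  rw [cartanPair, div_eq_iff (inner_self_ne_zero.2 hβ)] at hβα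
  rw [← inner_self_eq_zero (𝕜 := ℝ), real_inner_add_add_self]
  linarith [real_inner_comm α β]

namespace IsIrreducibleRootSystem

variable {R : Set V}

theorem ne_zero (hR : IsIrreducibleRootSystem R) {α : V} (hα : α ∈ R) : α ≠ 0 :=
  ne_of_mem_of_not_mem hα hR.zero_notMem

theorem neg_mem (hR : IsIrreducibleRootSystem R) {α : V} (hα : α ∈ R) : -α ∈ R :=
  reflV_self (hR.ne_zero hα) ▸ hR.refl_mem α hα α hα

theorem add_mem_of_inner_neg (hR : IsIrreducibleRootSystem R) {α β : V} (hα : α ∈ R)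
    (hβ : β ∈ R) (hneg : ⟪α, β⟫_ℝ < 0) (hne : α + β ≠ 0) : α + β ∈ R := by
  obtain ⟨n, hn⟩ := hR.cartan_int α hα β hβ
  obtain ⟨m, hm⟩ := hR.cartan_int β hβ α hα
  have hn_neg : n < 0 := by
    exact_mod_cast hn ▸ cartanPair_neg (hR.ne_zero hα) hneg
  have hm_neg : m < 0 := by
    exact_mod_cast hm ▸ cartanPair_neg (hR.ne_zero hβ) (by rwa [real_inner_comm])
  by_cases hn1 : n = -1
  · rw [add_comm, ← reflV_of_cartanPair_eq_neg_one (by simp [hn, hn1])]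
    exact hR.refl_mem α hα β hβ
  by_cases hm1 : m = -1
  · rw [← reflV_of_cartanPair_eq_neg_one (by simp [hm, hm1])]
    exact hR.refl_mem β hβ α hα
  have hnm : n * m ≤ 4 := by
    exact_mod_cast hn ▸ hm ▸ cartanPair_mul_cartanPair_le_four (hR.ne_zero hα) (hR.ne_zero hβ)
  have hn2 : n = -2 := by nlinarith [show n ≤ -2 by omega, show m ≤ -2 by omega]
  have hm2 : m = -2 := by nlinarith [show n ≤ -2 by omega, show m ≤ -2 by omega]
  exact absurd (add_eq_zero_of_cartanPair_eq_neg_two (hR.ne_zero hα) (hR.ne_zero hβ)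
    (by simp [hn, hn2]) (by simp [hm, hm2])) hne

theorem eq_of_forall_inner_ne_zero_mem (hR : IsIrreducibleRootSystem R) {N : Set V}
    (hN : N ⊆ R) (hne : N.Nonempty) (h : ∀ a ∈ N, ∀ b ∈ R, ⟪a, b⟫_ℝ ≠ 0 → b ∈ N) : N = R := by
  by_contra hNR
  obtain ⟨b, hbR, hbN⟩ := Set.exists_of_ssubset (hN.ssubset_of_ne hNR)
  obtain ⟨a, ha, c, hc, hac⟩ :=
    hR.irred N (R \ N) (Set.union_sdiff_cancel hN).symm hne ⟨b, hbR, hbN⟩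
  exact hc.2 (h a ha c hc.1 hac)

end IsIrreducibleRootSystem

section Affine

variable {R : Set V}

theorem isClosedSubrootSystem_liftF (hR : IsIrreducibleRootSystem R) {S : Set V}
    (hS : IsSubrootSystemF R S) (hSc : IsClosedInF R S) :
    IsClosedSubrootSystem (affineRS R) (liftF S) := by
  obtain ⟨⟨α, hα⟩, hSR, hne, hrefl⟩ := hS
  refine ⟨⟨⟨_, (mk_mem_liftF (r := 0)).2 hα⟩, liftF_mono hSR, fun h => hne ?_, ?_⟩, ?_⟩
  · rw [← Gr_liftF S, h, affineRS_eq_liftF, Gr_liftF]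
  · rintro ⟨α, _⟩ ⟨hα, r, rfl⟩ ⟨β, _⟩ ⟨hβ, s, rfl⟩
    obtain ⟨n, hn⟩ := hR.cartan_int α (hSR hα) β (hSR hβ)
    rw [reflA_mk, hn, ← Int.cast_mul, ← Int.cast_sub]
    exact mk_mem_liftF.2 (hrefl α hα β hβ)
  · rintro ⟨α, _⟩ ⟨hα, r, rfl⟩ ⟨β, _⟩ ⟨hβ, s, rfl⟩ hsum
    rw [mk_intCast_add_mk_intCast] at hsum ⊢
    exact mk_mem_liftF.2 (hSc α hα β hβ (mk_mem_liftF.1 hsum))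

theorem isSubrootSystemF_Gr (hR : IsIrreducibleRootSystem R) {Ψ : Set (V × ℝ)}
    (hΨ : IsSubrootSystem (affineRS R) Ψ) (hGr : Gr Ψ ≠ R) : IsSubrootSystemF R (Gr Ψ) := by
  obtain ⟨⟨x, hx⟩, hΨR, -, hrefl⟩ := hΨ
  refine ⟨⟨_, (subset_liftF_Gr hΨR hx).1⟩, Gr_subset hΨR, hGr, ?_⟩
  rintro α ⟨r, hr⟩ β ⟨s, hs⟩
  obtain ⟨n, hn⟩ := hR.cartan_int α (Gr_subset hΨR ⟨r, hr⟩) β (Gr_subset hΨR ⟨s, hs⟩)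
  have := hrefl _ hr _ hs
  rw [reflA_mk, hn, ← Int.cast_mul, ← Int.cast_sub] at this
  exact ⟨_, this⟩

theorem neg_mk_mem_of_forall_mk_mem {Δ : Set (V × ℝ)}
    (hrefl : ∀ x ∈ Δ, ∀ y ∈ Δ, reflA x y ∈ Δ) {α : V} (hα : α ≠ 0)
    (hfull : ∀ r : ℤ, (α, (r : ℝ)) ∈ Δ) (r : ℤ) : (-α, (r : ℝ)) ∈ Δ := by
  have := hrefl _ (hfull (-r)) _ (hfull (-r))
  rwa [reflA_mk, reflV_self hα, cartanPair_self hα, Int.cast_neg,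
    show -(r : ℝ) - 2 * -r = r by ring] at this

theorem forall_mk_mem_of_inner_neg (hR : IsIrreducibleRootSystem R) {Δ : Set (V × ℝ)}
    (hrefl : ∀ x ∈ Δ, ∀ y ∈ Δ, reflA x y ∈ Δ) (hcl : IsClosedIn (affineRS R) Δ)
    {β γ : V} (hβ : β ∈ R) (hγR : γ ∈ R) (hγ : γ ∈ Gr Δ)
    (hfull : ∀ r : ℤ, (β, (r : ℝ)) ∈ Δ) (hneg : ⟪β, γ⟫_ℝ < 0) (r : ℤ) :
    (γ, (r : ℝ)) ∈ Δ := by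
  have hfull_neg := neg_mk_mem_of_forall_mk_mem hrefl (hR.ne_zero hβ) hfull
  by_cases hγβ : γ = -β
  · exact hγβ ▸ hfull_neg r
  have hβγ : β + γ ∈ R :=
    hR.add_mem_of_inner_neg hβ hγR hneg fun h => hγβ (eq_neg_of_add_eq_zero_right h)
  obtain ⟨s, hs⟩ := hγ
  have hsum : ∀ t : ℤ, (β + γ, (t : ℝ)) ∈ Δ := by
    intro t
    have := hcl _ (hfull (t - s)) _ hs
    rw [mk_intCast_add_mk_intCast, sub_add_cancel] at this
    exact this (mk_mem_liftF.2 hβγ)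
  have := hcl _ (hsum r) _ (hfull_neg 0)
  rw [mk_intCast_add_mk_intCast, add_neg_cancel_comm, add_zero] at this
  exact this (mk_mem_liftF.2 hγR)

theorem forall_mk_mem_of_inner_ne_zero (hR : IsIrreducibleRootSystem R) {Δ : Set (V × ℝ)}
    (hrefl : ∀ x ∈ Δ, ∀ y ∈ Δ, reflA x y ∈ Δ) (hcl : IsClosedIn (affineRS R) Δ)
    {β γ : V} (hβ : β ∈ R) (hγR : γ ∈ R) (hγ : γ ∈ Gr Δ)
    (hfull : ∀ r : ℤ, (β, (r : ℝ)) ∈ Δ) (hne : ⟪β, γ⟫_ℝ ≠ 0) (r : ℤ) :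
    (γ, (r : ℝ)) ∈ Δ := by
  rcases hne.lt_or_gt with hneg | hpos
  · exact forall_mk_mem_of_inner_neg hR hrefl hcl hβ hγR hγ hfull hneg r
  · exact forall_mk_mem_of_inner_neg hR hrefl hcl (hR.neg_mem hβ) hγR hγ
      (neg_mk_mem_of_forall_mk_mem hrefl (hR.ne_zero hβ) hfull)
      (by rwa [inner_neg_left, neg_lt_zero]) r

theorem eq_affineRS_of_Gr_eq (hR : IsIrreducibleRootSystem R) {Δ : Set (V × ℝ)}
    (hΔR : Δ ⊆ affineRS R) (hrefl : ∀ x ∈ Δ, ∀ y ∈ Δ, reflA x y ∈ Δ)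
    (hcl : IsClosedIn (affineRS R) Δ) {α : V} (hα : α ∈ R)
    (hfull : ∀ r : ℤ, (α, (r : ℝ)) ∈ Δ) (hGr : Gr Δ = R) : Δ = affineRS R := by
  have hN : {β ∈ R | ∀ r : ℤ, (β, (r : ℝ)) ∈ Δ} = R :=
    hR.eq_of_forall_inner_ne_zero_mem (fun _ h => h.1) ⟨α, hα, hfull⟩ fun β hβ γ hγ hne =>
      ⟨hγ, forall_mk_mem_of_inner_ne_zero hR hrefl hcl hβ.1 hγ (hGr ▸ hγ) hβ.2 hne⟩
  refine hΔR.antisymm ?_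
  rw [affineRS_eq_liftF, liftF_subset_iff]
  intro β hβ
  rw [← hN] at hβ
  exact hβ.2

theorem liftF_Gr_eq (hR : IsIrreducibleRootSystem R) {Ψ : Set (V × ℝ)}
    (hΨ : IsMaximalClosedSubrootSystem (affineRS R) Ψ) (hGr : Gr Ψ ≠ R) :
    liftF (Gr Ψ) = Ψ :=
  hΨ.2 _ (isClosedSubrootSystem_liftF hR (isSubrootSystemF_Gr hR hΨ.1.1 hGr)
    (isClosedInF_Gr hΨ.1.2)) (subset_liftF_Gr hΨ.1.1.2.1)

theorem isMaximalClosedSubrootSystemF_Gr (hR : IsIrreducibleRootSystem R)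
    {Ψ : Set (V × ℝ)} (hΨ : IsMaximalClosedSubrootSystem (affineRS R) Ψ) (hGr : Gr Ψ ≠ R) :
    IsMaximalClosedSubrootSystemF R (Gr Ψ) := by
  refine ⟨⟨isSubrootSystemF_Gr hR hΨ.1.1 hGr, isClosedInF_Gr hΨ.1.2⟩, fun T hT hTc hST => ?_⟩
  have hΨT : Ψ ⊆ liftF T := liftF_Gr_eq hR hΨ hGr ▸ liftF_mono hST
  rw [← Gr_liftF T, hΨ.2 _ (isClosedSubrootSystem_liftF hR hT hTc) hΨT]

theorem isMaximalClosedSubrootSystem_liftF (hR : IsIrreducibleRootSystem R) {M : Set V}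
    (hM : IsMaximalClosedSubrootSystemF R M) :
    IsMaximalClosedSubrootSystem (affineRS R) (liftF M) := by
  obtain ⟨⟨hMsub, hMcl⟩, hMmax⟩ := hM
  refine ⟨isClosedSubrootSystem_liftF hR hMsub hMcl, fun Δ hΔ hMΔ => ?_⟩
  obtain ⟨α, hα⟩ := hMsub.1
  have hGr : Gr Δ ≠ R := fun hGr => hΔ.1.2.2.1 <|
    eq_affineRS_of_Gr_eq hR hΔ.1.2.1 hΔ.1.2.2.2 hΔ.2 (hMsub.2.1 hα)
      (liftF_subset_iff.1 hMΔ α hα) hGr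
  have hGrM : Gr Δ = M := hMmax _ (isSubrootSystemF_Gr hR hΔ.1 hGr) (isClosedInF_Gr hΔ.2)
    (Gr_liftF M ▸ Gr_mono hMΔ)
  exact (hGrM ▸ subset_liftF_Gr hΔ.1.2.1).antisymm hMΔ

end Affine

theorem statement5_general
    {V : Type*} [NormedAddCommGroup V] [InnerProductSpace ℝ V]
    (R : Set V) (hR : IsIrreducibleRootSystem R) (Ψ : Set (V × ℝ)) :
    (IsMaximalClosedSubrootSystem (affineRS R) Ψ ∧ Gr Ψ ≠ R) ↔
      ∃ M : Set V, IsMaximalClosedSubrootSystemF R M ∧ Ψ = liftF M := by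
  constructor
  · rintro ⟨hΨ, hGr⟩
    exact ⟨Gr Ψ, isMaximalClosedSubrootSystemF_Gr hR hΨ hGr, (liftF_Gr_eq hR hΨ hGr).symm⟩
  · rintro ⟨M, hM, rfl⟩
    exact ⟨isMaximalClosedSubrootSystem_liftF hR hM, by rw [Gr_liftF]; exact hM.1.1.2.2.1⟩

/-- `Ψ` is a maximal closed subroot system of the untwisted affine
root system with `Gr(Ψ) ≠ Φ̊` iff `Ψ` is the lift of a maximal closed subroot
system of `Φ̊`. -/
theorem statement5
    {V : Type*} [NormedAddCommGroup V] [InnerProductSpace ℝ V] [FiniteDimensional ℝ V]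
    (R : Set V) (hR : IsIrreducibleRootSystem R) (Ψ : Set (V × ℝ)) :
    (IsMaximalClosedSubrootSystem (affineRS R) Ψ ∧ Gr Ψ ≠ R) ↔
      ∃ M : Set V, IsMaximalClosedSubrootSystemF R M ∧ Ψ = liftF M :=
  statement5_general R hR Ψ
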